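/- Let T : X → Y be globally Lipschitz from a separable Banach space X into a separable reflexive Banach space Y. If x_n → x in X, L_n ∈ ∂_B^{sw} T(x_n) for each n (the strong-weak Bouligand subdifferential), and L_n → L in the weak operator topology, then L ∈ ∂_B^{sw} T(x). -/

import Mathlib

/-!
Every Gâteaux derivative of a `K`-Lipschitz map has norm at most `K`, and on operators of bounded
norm weak operator convergence is detected by the countably many scalars `F j (D (S i))`, for dense
sequences `S` in `X` and `F` in `Y*` (`Y*` is separable because its dual `Y**`, the image of `Y`,
is). So `L ∈ ∂_B^{sw} T x` exactly when `(x, (F j (L (S i)))ᵢⱼ)` lies in the closure of the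
corresponding image of the graph of the Gâteaux derivative. That image lives in the first
countable space `X × ℝ^(ℕ × ℕ)`, where closures are sequential, and a closed set contains the
limit of the points attached to `(x n, L n)`.
-/

open Filter Topology TopologicalSpace

/-- Gâteaux differentiability of `T` at `x` with (bounded linear) derivative `L`. -/
def GateauxAt {X Y : Type*} [NormedAddCommGroup X] [NormedSpace ℝ X]
    [NormedAddCommGroup Y] [NormedSpace ℝ Y] (T : X → Y) (x : X) (L : X →L[ℝ] Y) : Prop :=
  ∀ h : X, Tendsto (fun t : ℝ => t⁻¹ • (T (x + t • h) - T x)) (𝓝[≠] 0) (𝓝 (L h))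

/-- Convergence in the weak operator topology of a sequence of operators. -/
def WOTConv {X Y : Type*} [NormedAddCommGroup X] [NormedSpace ℝ X]
    [NormedAddCommGroup Y] [NormedSpace ℝ Y]
    (D : ℕ → X →L[ℝ] Y) (L : X →L[ℝ] Y) : Prop :=
  ∀ (h : X) (f : Y →L[ℝ] ℝ), Tendsto (fun n => f ((D n) h)) atTop (𝓝 (f (L h)))

/-- The strong-weak Bouligand subdifferential of `T` at `x`: limits in the weak operator
topology of Gâteaux derivatives `T'(x_m)` along sequences `x_m → x` of Gâteaux points. -/
def BouligandSW {X Y : Type*} [NormedAddCommGroup X] [NormedSpace ℝ X]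
    [NormedAddCommGroup Y] [NormedSpace ℝ Y] (T : X → Y) (x : X) : Set (X →L[ℝ] Y) :=
  {L | ∃ (u : ℕ → X) (D : ℕ → X →L[ℝ] Y),
    (∀ m, GateauxAt T (u m) (D m)) ∧ Tendsto u atTop (𝓝 x) ∧ WOTConv D L}

section Separability

variable {E : Type*} [NormedAddCommGroup E] [NormedSpace ℝ E]

theorem eq_zero_of_forall_apply_eq_zero_of_norming {g : ℕ → StrongDual ℝ E}
    (hg : DenseRange g) {v : ℕ → E} (hv : ∀ n, ‖v n‖ ≤ 1) (hgv : ∀ n, ‖g n‖ ≤ 2 * ‖g n (v n)‖)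
    {f : StrongDual ℝ E} (hf : ∀ n, f (v n) = 0) : f = 0 := by
  have hclose : ∀ n, ‖f‖ ≤ 3 * ‖g n - f‖ := fun n =>
    calc ‖f‖ ≤ ‖g n‖ + ‖f - g n‖ := norm_le_norm_add_norm_sub' _ _
      _ ≤ 2 * ‖(g n - f) (v n)‖ + ‖g n - f‖ := by
          rw [norm_sub_rev]
          simpa [hf n] using hgv n
      _ ≤ 2 * (‖g n - f‖ * 1) + ‖g n - f‖ := by gcongr; exact (g n - f).le_opNorm_of_le (hv n)
      _ = 3 * ‖g n - f‖ := by ring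
  refine norm_le_zero_iff.mp (le_of_forall_pos_lt_add fun ε hε => ?_)
  obtain ⟨n, hn⟩ := Metric.denseRange_iff.mp hg f (ε / 3) (by positivity)
  rw [dist_comm, dist_eq_norm] at hn
  linarith [hclose n]

theorem SeparableSpace.of_separableSpace_strongDual [SeparableSpace (StrongDual ℝ E)] :
    SeparableSpace E := by
  obtain ⟨g, hg⟩ := exists_dense_seq (StrongDual ℝ E)
  have hnorming : ∀ n, ∃ v : E, ‖v‖ ≤ 1 ∧ ‖g n‖ ≤ 2 * ‖g n v‖ := fun n => by
    rcases eq_or_ne (g n) 0 with h0 | h0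
    · exact ⟨0, by simp [h0]⟩
    · obtain ⟨v, hv, hgv⟩ := (g n).exists_lt_apply_of_lt_opNorm
        (half_lt_self (norm_pos_iff.mpr h0))
      exact ⟨v, hv.le, by linarith⟩
  choose v hv hgv using hnorming
  set M := (Submodule.span ℝ (Set.range v)).topologicalClosure
  have hM : M = ⊤ := by
    refine Submodule.eq_top_iff'.mpr fun y => by_contra fun hy => ?_
    have : IsClosed (M : Set E) := Submodule.isClosed_topologicalClosure _
    obtain ⟨φ, hφ⟩ := SeparatingDual.exists_ne_zero (R := ℝ)
      (mt (Submodule.Quotient.mk_eq_zero M).mp hy)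
    have hvM : ∀ n, v n ∈ M := fun n =>
      Submodule.le_topologicalClosure _ (Submodule.subset_span (Set.mem_range_self n))
    have hφM : φ.comp M.mkQL = 0 := eq_zero_of_forall_apply_eq_zero_of_norming hg hv hgv
      fun n => by simp [(Submodule.Quotient.mk_eq_zero M).mpr (hvM n)]
    exact hφ (by simpa using congrArg (· y) hφM)
  have hsep : IsSeparable (M : Set E) := (Set.countable_range v).isSeparable.span.closure
  rw [hM] at hsep
  exact isSeparable_univ_iff.mp (by simpa using hsep)

theorem separableSpace_strongDual_of_surjective_inclusionInDoubleDual [SeparableSpace E]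
    (hrefl : Function.Surjective (NormedSpace.inclusionInDoubleDual ℝ E)) :
    SeparableSpace (StrongDual ℝ E) :=
  have : SeparableSpace (StrongDual ℝ (StrongDual ℝ E)) :=
    hrefl.denseRange.separableSpace (NormedSpace.inclusionInDoubleDual ℝ E).continuous
  SeparableSpace.of_separableSpace_strongDual

end Separability

section Operators

variable {X Y : Type*} [NormedAddCommGroup X] [NormedSpace ℝ X]
  [NormedAddCommGroup Y] [NormedSpace ℝ Y]

theorem GateauxAt.opNorm_le {T : X → Y} {K : NNReal} (hT : LipschitzWith K T) {u : X}
    {D : X →L[ℝ] Y} (hD : GateauxAt T u D) : ‖D‖ ≤ K := by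
  refine D.opNorm_le_bound K.coe_nonneg fun h => le_of_tendsto (hD h).norm ?_
  filter_upwards [self_mem_nhdsWithin] with t ht
  have hlip : ‖T (u + t • h) - T u‖ ≤ K * (|t| * ‖h‖) := by
    simpa [dist_eq_norm, norm_smul] using hT.dist_le_mul (u + t • h) u
  calc ‖t⁻¹ • (T (u + t • h) - T u)‖ ≤ |t|⁻¹ * (K * (|t| * ‖h‖)) := by
        rw [norm_smul, norm_inv, Real.norm_eq_abs]; gcongr
    _ = K * ‖h‖ := by field_simp [abs_ne_zero.mpr ht]

theorem ContinuousLinearMap.tendsto_apply_of_dense {𝕜 E F ι : Type*}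
    [NontriviallyNormedField 𝕜] [SeminormedAddCommGroup E] [NormedSpace 𝕜 E]
    [SeminormedAddCommGroup F] [NormedSpace 𝕜 F]
    {l : Filter ι} {A : ι → E →L[𝕜] F} {A₀ : E →L[𝕜] F} {C : ℝ} (hA : ∀ i, ‖A i‖ ≤ C) {s : Set E}
    (hs : Dense s) (h : ∀ v ∈ s, Tendsto (fun i => A i v) l (𝓝 (A₀ v))) (x : E) :
    Tendsto (fun i => A i x) l (𝓝 (A₀ x)) := by
  have hequi : Equicontinuous ((↑) ∘ A) :=
    (show (∃ C, ∀ i, ‖A i‖ ≤ C) ↔ _ from (NormedSpace.equicontinuous_TFAE A).out 5 1).mp ⟨C, hA⟩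
  exact closure_minimal h (hequi.isClosed_setOfPred_tendsto A₀.continuous) (hs x)

theorem WOTConv.of_dense {D : ℕ → X →L[ℝ] Y} {L : X →L[ℝ] Y} {C : ℝ} (hD : ∀ n, ‖D n‖ ≤ C)
    {s : Set X} (hs : Dense s) {t : Set (StrongDual ℝ Y)} (ht : Dense t)
    (h : ∀ v ∈ s, ∀ g ∈ t, Tendsto (fun n => g (D n v)) atTop (𝓝 (g (L v)))) :
    WOTConv D L := by
  intro x f
  have hx : ∀ g ∈ t, Tendsto (fun n => g (D n x)) atTop (𝓝 (g (L x))) := fun g hg =>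
    ContinuousLinearMap.tendsto_apply_of_dense (A₀ := g.comp L)
      (fun n => (g.opNorm_comp_le (D n)).trans (mul_le_mul_of_nonneg_left (hD n) (norm_nonneg g)))
      hs (h · · g hg) x
  have hJ : ∀ n, ‖NormedSpace.inclusionInDoubleDual ℝ Y (D n x)‖ ≤ C * ‖x‖ := fun n =>
    (NormedSpace.double_dual_bound ℝ Y _).trans ((D n).le_of_opNorm_le (hD n) x)
  exact ContinuousLinearMap.tendsto_apply_of_dense
    (A₀ := NormedSpace.inclusionInDoubleDual ℝ Y (L x)) hJ ht hx f

def wotSample (S : ℕ → X) (F : ℕ → StrongDual ℝ Y) (p : X × (X →L[ℝ] Y)) :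
    X × (ℕ × ℕ → ℝ) :=
  (p.1, fun ij => F ij.2 (p.2 (S ij.1)))

variable {S : ℕ → X} {F : ℕ → StrongDual ℝ Y}

theorem tendsto_wotSample {u : ℕ → X} {x : X} {D : ℕ → X →L[ℝ] Y} {L : X →L[ℝ] Y}
    (hu : Tendsto u atTop (𝓝 x)) (hD : WOTConv D L) :
    Tendsto (fun n => wotSample S F (u n, D n)) atTop (𝓝 (wotSample S F (x, L))) :=
  hu.prodMk_nhds (tendsto_pi_nhds.mpr fun ij => hD (S ij.1) (F ij.2))

theorem mem_bouligandSW_iff_wotSample_mem_closure {T : X → Y} {K : NNReal}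
    (hT : LipschitzWith K T) (hS : DenseRange S) (hF : DenseRange F) {x : X} {L : X →L[ℝ] Y} :
    L ∈ BouligandSW T x ↔
      wotSample S F (x, L) ∈ closure (wotSample S F '' {p | GateauxAt T p.1 p.2}) := by
  constructor
  · rintro ⟨u, D, hG, hu, hD⟩
    exact mem_closure_of_tendsto (tendsto_wotSample hu hD)
      (Eventually.of_forall fun n => Set.mem_image_of_mem _ (hG n))
  · intro hcl
    obtain ⟨q, hqG, hq⟩ := mem_closure_iff_seq_limit.mp hcl
    choose p hG hpq using hqG
    rw [show q = fun n => wotSample S F (p n) from funext fun n => (hpq n).symm] at hq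
    obtain ⟨hu, hsamples⟩ := (Prod.tendsto_iff _ _).mp hq
    refine ⟨fun n => (p n).1, fun n => (p n).2, hG, hu,
      WOTConv.of_dense (fun n => (hG n).opNorm_le hT) hS hF ?_⟩
    rintro _ ⟨i, rfl⟩ _ ⟨j, rfl⟩
    exact tendsto_pi_nhds.mp hsamples (i, j)

end Operators

theorem BouligandSW_closed_general
    {X Y : Type*} [NormedAddCommGroup X] [NormedSpace ℝ X]
    [TopologicalSpace.SeparableSpace X]
    [NormedAddCommGroup Y] [NormedSpace ℝ Y]
    [TopologicalSpace.SeparableSpace Y]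
    (hrefl : Function.Surjective ⇑(NormedSpace.inclusionInDoubleDual ℝ Y))
    (T : X → Y) (K : NNReal) (hT : LipschitzWith K T)
    (x : ℕ → X) (x₀ : X) (L : ℕ → X →L[ℝ] Y) (L₀ : X →L[ℝ] Y)
    (hx : Tendsto x atTop (𝓝 x₀))
    (hL : ∀ n, L n ∈ BouligandSW T (x n))
    (hconv : WOTConv L L₀) :
    L₀ ∈ BouligandSW T x₀ := by
  have := separableSpace_strongDual_of_surjective_inclusionInDoubleDual hrefl
  obtain ⟨S, hS⟩ := exists_dense_seq X
  obtain ⟨F, hF⟩ := exists_dense_seq (StrongDual ℝ Y)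
  simp only [mem_bouligandSW_iff_wotSample_mem_closure hT hS hF] at hL ⊢
  exact isClosed_closure.mem_of_tendsto (tendsto_wotSample hx hconv) (Eventually.of_forall hL)

/-- **Closedness of the strong-weak Bouligand subdifferential.**
Let `T : X → Y` be globally Lipschitz from a separable Banach space `X` into a
separable reflexive Banach space `Y`.  If `x n → x` in `X`, `L n ∈ ∂_B^{sw} T (x n)`
for each `n`, and `L n → L` in the weak operator topology, then `L ∈ ∂_B^{sw} T x`. -/
theorem BouligandSW_closed
    {X Y : Type*} [NormedAddCommGroup X] [NormedSpace ℝ X] [CompleteSpace X]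
    [TopologicalSpace.SeparableSpace X]
    [NormedAddCommGroup Y] [NormedSpace ℝ Y] [CompleteSpace Y]
    [TopologicalSpace.SeparableSpace Y]
    (hrefl : Function.Surjective ⇑(NormedSpace.inclusionInDoubleDual ℝ Y))
    (T : X → Y) (K : NNReal) (hT : LipschitzWith K T)
    (x : ℕ → X) (x₀ : X) (L : ℕ → X →L[ℝ] Y) (L₀ : X →L[ℝ] Y)
    (hx : Tendsto x atTop (𝓝 x₀))
    (hL : ∀ n, L n ∈ BouligandSW T (x n))
    (hconv : WOTConv L L₀) :
    L₀ ∈ BouligandSW T x₀ :=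
  BouligandSW_closed_general hrefl T K hT x x₀ L L₀ hx hL hconv
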